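/- Let d, m ≥ 1 be integers, let π be a non-crossing ε_d-partition of [2dm], and let σ be a non-crossing partition of [2dm] with σ ≤ π. Then σ is an ε_d-partition if and only if σ is even (every block of σ has even cardinality). -/

import Mathlib

open Finset

/-- Two elements lie in the same block of the partition `P`. -/
def SameBlock {N : ℕ} (P : Finpartition (univ : Finset (Fin N))) (s t : Fin N) : Prop :=
  ∃ B ∈ P.parts, s ∈ B ∧ t ∈ B

/-- A partition of `[N]` is non-crossing if there are no `s₁ < t₁ < s₂ < t₂` with
`s₁ ∼ s₂`, `t₁ ∼ t₂` but `s₁ ≁ t₁`. -/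
def NonCrossing {N : ℕ} (P : Finpartition (univ : Finset (Fin N))) : Prop :=
  ∀ s₁ t₁ s₂ t₂ : Fin N, s₁ < t₁ → t₁ < s₂ → s₂ < t₂ →
    SameBlock P s₁ s₂ → SameBlock P t₁ t₂ → SameBlock P s₁ t₁

/-- Every block has even cardinality. -/
def EvenPartition {N : ℕ} (P : Finpartition (univ : Finset (Fin N))) : Prop :=
  ∀ B ∈ P.parts, Even B.card

/-- The (two-valued) function `ε` alternates along each block of `P`, listed in
increasing order. -/
def Alternating {N : ℕ} (ε : Fin N → Bool) (P : Finpartition (univ : Finset (Fin N))) : Prop :=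
  ∀ B ∈ P.parts, (Finset.sort B (· ≤ ·)).Chain' (fun a b => ε a ≠ ε b)

/-- An `ε`-partition: an even partition on each block of which `ε` alternates. -/
def EpsPartition {N : ℕ} (ε : Fin N → Bool) (P : Finpartition (univ : Finset (Fin N))) : Prop :=
  EvenPartition P ∧ Alternating ε P

/-- A pairing: every block has exactly two elements. -/
def IsPairing {N : ℕ} (P : Finpartition (univ : Finset (Fin N))) : Prop :=
  ∀ B ∈ P.parts, B.card = 2

/-- `σ` refines `π`: every block of `σ` is contained in a block of `π` (i.e. `σ ≤ π`). -/
def Refines {N : ℕ} (σ π : Finpartition (univ : Finset (Fin N))) : Prop :=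
  ∀ B ∈ σ.parts, ∃ C ∈ π.parts, B ⊆ C

/-- The pattern `ε_d = (1^d ∗^d)^m` on `[2dm]` (0-based; `true` codes `1`, `false` codes `∗`). -/
def epsd (d m : ℕ) : Fin (2*d*m) → Bool := fun j => decide ((j : ℕ) / d % 2 = 0)

/-- `ker I ≥ π` : the function `I` is constant on every block of `π`. -/
def KerGe {N : ℕ} {Λ : Type*} (π : Finpartition (univ : Finset (Fin N))) (I : Fin N → Λ) : Prop :=
  ∀ B ∈ π.parts, ∀ s ∈ B, ∀ t ∈ B, I s = I t

/-- The position `(j-1)d + l` in `[2dm]`, splitting `[2dm]` into `2m` consecutive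
segments of length `d`. -/
def seg (d m : ℕ) (j : Fin (2*m)) (l : Fin d) : Fin (2*d*m) :=
  ⟨j.1 * d + l.1, by
    have hj : j.1 + 1 ≤ 2*m := j.2
    have hl : l.1 < d := l.2
    calc j.1 * d + l.1 < j.1 * d + d := by linarith
      _ = (j.1 + 1) * d := by ring
      _ ≤ (2*m) * d := Nat.mul_le_mul hj (Nat.le_refl d)
      _ = 2*d*m := by ring⟩


theorem List.IsChain.bool_eq_xor_mod_two {α : Type*} {f : α → Bool} {l : List α}
    (h : l.IsChain (fun a b => f a ≠ f b)) (i : ℕ) (hi : i < l.length) :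
    f l[i] = (f l[0] ^^ decide (i % 2 = 1)) := by
  induction i with
  | zero => simp
  | succ i ih =>
    have hflip : f l[i + 1] = !f l[i] := by
      have := List.isChain_iff_getElem.mp h i hi
      revert this; cases f l[i] <;> cases f l[i + 1] <;> simp
    rw [hflip, ih (by omega)]
    rcases Nat.mod_two_eq_zero_or_one i with h2 | h2 <;>
      simp [h2, Nat.add_mod]

theorem List.IsChain.bool_eq_iff_mod_two {α : Type*} {f : α → Bool} {l : List α}
    (h : l.IsChain (fun a b => f a ≠ f b)) {i j : ℕ} (hi : i < l.length) (hj : j < l.length) :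
    f l[i] = f l[j] ↔ i % 2 = j % 2 := by
  rw [h.bool_eq_xor_mod_two i hi, h.bool_eq_xor_mod_two j hj]
  rcases Nat.mod_two_eq_zero_or_one i with h2 | h2 <;>
    rcases Nat.mod_two_eq_zero_or_one j with h3 | h3 <;> simp [h2, h3]

namespace Finset

variable {α : Type*} [LinearOrder α]

theorem card_filter_between_sort (s : Finset α) (i j : Fin (s.sort).length) :
    #{x ∈ s | (s.sort).get i < x ∧ x < (s.sort).get j} = j - i - 1 := by
  have hmono : StrictMono (s.sort).get := s.sortedLT_sort.strictMono_get
  have himage : {x ∈ s | (s.sort).get i < x ∧ x < (s.sort).get j} =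
      (Ioo i j).image (s.sort).get := by
    ext x
    simp only [mem_filter, mem_image, mem_Ioo]
    constructor
    · rintro ⟨hxs, hix, hxj⟩
      obtain ⟨k, rfl⟩ := List.mem_iff_get.mp ((mem_sort (α := α) (· ≤ ·)).mpr hxs)
      exact ⟨k, ⟨hmono.lt_iff_lt.mp hix, hmono.lt_iff_lt.mp hxj⟩, rfl⟩
    · rintro ⟨k, ⟨hik, hkj⟩, rfl⟩
      exact ⟨(mem_sort (α := α) (· ≤ ·)).mp (List.get_mem _ _), hmono hik, hmono hkj⟩
  rw [himage, card_image_of_injective _ hmono.injective, Fin.card_Ioo]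

theorem ne_of_even_card_filter_between {ε : α → Bool} {s : Finset α}
    (hs : (s.sort).IsChain (fun a b => ε a ≠ ε b)) {a b : α} (ha : a ∈ s) (hb : b ∈ s)
    (hab : a < b) (heven : Even #{x ∈ s | a < x ∧ x < b}) : ε a ≠ ε b := by
  obtain ⟨i, rfl⟩ := List.mem_iff_get.mp ((mem_sort (α := α) (· ≤ ·)).mpr ha)
  obtain ⟨j, rfl⟩ := List.mem_iff_get.mp ((mem_sort (α := α) (· ≤ ·)).mpr hb)
  have hij : i < j := s.sortedLT_sort.strictMono_get.lt_iff_lt.mp hab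
  rw [card_filter_between_sort] at heven
  simp only [List.get_eq_getElem, ne_eq, hs.bool_eq_iff_mod_two]
  rcases heven with ⟨t, ht⟩
  omega

end Finset

section Partitions

variable {N : ℕ}

theorem SameBlock.mem_of_mem {P : Finpartition (univ : Finset (Fin N))} {s t : Fin N}
    (h : SameBlock P s t) {D : Finset (Fin N)} (hD : D ∈ P.parts) (hs : s ∈ D) : t ∈ D := by
  obtain ⟨B, hB, hsB, htB⟩ := h
  rwa [P.eq_of_mem_parts hD hB hs hsB]

theorem EvenPartition.even_card_of_saturated {σ : Finpartition (univ : Finset (Fin N))}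
    (hσ : EvenPartition σ) {S : Finset (Fin N)}
    (hS : ∀ D ∈ σ.parts, ∀ g ∈ D, g ∈ S → D ⊆ S) : Even #S := by
  have hsum : #S = ∑ D ∈ σ.parts, #(D ∩ S) := by
    rw [← (σ.restrict (subset_univ S)).sum_card_parts, Finpartition.sum_restrict _ _ _ card_empty]
    rfl
  rw [hsum]
  refine even_sum _ fun D hD => ?_
  obtain ⟨g, hg⟩ | hempty := (D ∩ S).eq_empty_or_nonempty.symm
  · rw [inter_eq_left.mpr (hS D hD g (mem_inter.mp hg).1 (mem_inter.mp hg).2)]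
    exact hσ D hD
  · rw [hempty, card_empty]
    exact Even.zero

theorem NonCrossing.mem_gap_of_mem_gap {σ : Finpartition (univ : Finset (Fin N))}
    (hσ : NonCrossing σ) {B D : Finset (Fin N)} (hB : B ∈ σ.parts) (hD : D ∈ σ.parts)
    {a b g y : Fin N} (ha : a ∈ B) (hb : b ∈ B) (hgap : ∀ x ∈ B, ¬(a < x ∧ x < b))
    (hg : g ∈ D) (hag : a < g) (hgb : g < b) (hy : y ∈ D) : a < y ∧ y < b := by
  have hDB : D ≠ B := by
    rintro rfl
    exact hgap g hg ⟨hag, hgb⟩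
  have hnot : ∀ x ∈ B, x ∉ D := fun x hx hxD => hDB (σ.eq_of_mem_parts hD hB hxD hx)
  refine ⟨lt_of_not_ge fun hya => ?_, lt_of_not_ge fun hby => ?_⟩
  · have hya : y < a := lt_of_le_of_ne hya (by rintro rfl; exact hnot _ ha hy)
    exact hnot a ha ((hσ y a g b hya hag hgb ⟨D, hD, hy, hg⟩ ⟨B, hB, ha, hb⟩).mem_of_mem hD hy)
  · have hby : b < y := lt_of_le_of_ne hby (by rintro rfl; exact hnot _ hb hy)
    exact hgap g ((hσ a g b y hag hgb hby ⟨B, hB, ha, hb⟩ ⟨D, hD, hg, hy⟩).mem_of_mem hB ha)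
      ⟨hag, hgb⟩

theorem even_card_filter_gap_of_refines {π σ : Finpartition (univ : Finset (Fin N))}
    (hσNC : NonCrossing σ) (hσE : EvenPartition σ) (hle : Refines σ π)
    {B C : Finset (Fin N)} (hB : B ∈ σ.parts) (hC : C ∈ π.parts) {a b : Fin N}
    (ha : a ∈ B) (hb : b ∈ B) (hgap : ∀ x ∈ B, ¬(a < x ∧ x < b)) :
    Even #{x ∈ C | a < x ∧ x < b} := by
  refine hσE.even_card_of_saturated fun D hD g hgD hgS y hyD => ?_
  obtain ⟨hgC, hag, hgb⟩ := mem_filter.mp hgS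
  obtain ⟨C', hC', hDC'⟩ := hle D hD
  have hDC : D ⊆ C := π.eq_of_mem_parts hC' hC (hDC' hgD) hgC ▸ hDC'
  exact mem_filter.mpr ⟨hDC hyD, hσNC.mem_gap_of_mem_gap hB hD ha hb hgap hgD hag hgb hyD⟩

/-- The elements of a `π`-block strictly between consecutive elements of a `σ`-block form a
union of `σ`-blocks, hence are even in number, so alternation passes from `π` to `σ`. -/
theorem Alternating.of_refines {ε : Fin N → Bool} {π σ : Finpartition (univ : Finset (Fin N))}
    (hπ : Alternating ε π) (hσNC : NonCrossing σ) (hσE : EvenPartition σ)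
    (hle : Refines σ π) : Alternating ε σ := by
  intro B hB
  obtain ⟨C, hC, hBC⟩ := hle B hB
  refine List.isChain_iff_getElem.mpr fun i hi => ?_
  set a := (B.sort).get ⟨i, by omega⟩
  set b := (B.sort).get ⟨i + 1, hi⟩
  have ha : a ∈ B := (mem_sort (α := Fin N) (· ≤ ·)).mp (List.get_mem _ _)
  have hb : b ∈ B := (mem_sort (α := Fin N) (· ≤ ·)).mp (List.get_mem _ _)
  have hab : a < b := B.sortedLT_sort.strictMono_get (Fin.mk_lt_mk.mpr i.lt_succ_self)
  have hgap : ∀ x ∈ B, ¬(a < x ∧ x < b) := by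
    have hnone := card_filter_between_sort B ⟨i, by omega⟩ ⟨i + 1, hi⟩
    simpa only [add_tsub_cancel_left, tsub_self, card_eq_zero, filter_eq_empty_iff] using hnone
  exact ne_of_even_card_filter_between (hπ C hC) (hBC ha) (hBC hb) hab
    (even_card_filter_gap_of_refines hσNC hσE hle hB hC ha hb hgap)

end Partitions

theorem epsPartition_iff_even_of_refines_general (d m : ℕ)
    (π σ : Finpartition (univ : Finset (Fin (2*d*m))))
    (hπ : EpsPartition (epsd d m) π)
    (hσNC : NonCrossing σ) (hle : Refines σ π) :
    EpsPartition (epsd d m) σ ↔ EvenPartition σ :=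
  ⟨And.left, fun hσE => ⟨hσE, hπ.2.of_refines hσNC hσE hle⟩⟩

/-- first assertion of Lemma 3.6 of the paper: if `π` is a
non-crossing `ε_d`-partition of `[2dm]` and `σ` is a non-crossing partition with
`σ ≤ π`, then `σ` is an `ε_d`-partition iff `σ` is even. -/
theorem epsPartition_iff_even_of_refines (d m : ℕ) (hd : 1 ≤ d) (hm : 1 ≤ m)
    (π σ : Finpartition (univ : Finset (Fin (2*d*m))))
    (hπNC : NonCrossing π) (hπ : EpsPartition (epsd d m) π)
    (hσNC : NonCrossing σ) (hle : Refines σ π) :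
    EpsPartition (epsd d m) σ ↔ EvenPartition σ :=
  epsPartition_iff_even_of_refines_general d m π σ hπ hσNC hle
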